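/- If there exists a binary linear [n, k, 8m] code (with m ≤ (n+1)/2, and l ≥ n+1 an odd prime), then there exists a rank-n lattice with center density at least 2^{k-n/2} · m^{n/2} / (l^{m-1} (n+1)^{1/2}). -/

import Mathlib

open Finset

noncomputable def derAt1 (n i : ℕ) : (Fin (n + 1) → ℤ) →ₗ[ℤ] ℤ :=
  ∑ j : Fin (n + 1), (((j : ℕ).descFactorial i : ℤ)) • LinearMap.proj j

noncomputable def rootLat (n : ℕ) : Submodule ℤ (Fin (n + 1) → ℤ) :=
  LinearMap.ker (derAt1 n 0)

/-!
Let `L` consist of the `v ∈ A_n` whose first `n` coordinates reduce mod 2 into `C` and which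
satisfy the Craig congruences `∑ⱼ j^{(i)} vⱼ ≡ 0 (mod l)` for `0 < i < m`. A nonzero `v ∈ L` either
reduces to a nonzero codeword, and then has at least `8m` odd coordinates, or is `2w` with `w` a
nonzero vector of the Craig lattice `A_n^{(m,l)}` (as `l` is odd), of norm at least `2m`.

Craig's bound: the positive and negative parts of `w` are multisets of points of `𝔽_l` of the same
size `N < m` whose power sums of orders `≤ N` agree, so they coincide by Newton's identities
(`N! ≠ 0` in `𝔽_l`), forcing `w = 0`. The index is `2^{n-k} l^{m-1}` because the reduction
`A_n → (𝔽₂ⁿ / C) × 𝔽_l^{m-1}` is onto: each factor is onto and their exponents are coprime.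
-/

open Polynomial

section Newton

variable {R : Type*} [CommRing R]

theorem Multiset.mul_esymm_eq_sum_map_pow (s : Multiset R) (k : ℕ) :
    k * s.esymm k = (-1) ^ (k + 1) * ∑ a ∈ HasAntidiagonal.antidiagonal k with a.1 < k,
      (-1) ^ a.1 * s.esymm a.1 * (s.map (· ^ a.2)).sum := by
  classical
  let x := fun y : s.ToType => (y : R)
  have hpsum (j : ℕ) : MvPolynomial.aeval x (MvPolynomial.psum s.ToType R j)
      = (s.map (· ^ j)).sum := by
    simp only [MvPolynomial.psum, map_sum, map_pow, MvPolynomial.aeval_X]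
    rw [← Multiset.map_univ_comp_coe]
    rfl
  have := congrArg (MvPolynomial.aeval x) (MvPolynomial.mul_esymm_eq_sum s.ToType R k)
  simpa only [map_mul, map_sum, map_pow, map_neg, map_one, map_natCast, hpsum,
    MvPolynomial.aeval_esymm_eq_multiset_esymm, x, Multiset.map_univ_coe] using this

variable [IsDomain R]

theorem Multiset.esymm_eq_of_sum_map_pow_eq {s t : Multiset R} {N : ℕ}
    (hchar : ∀ i, 0 < i → i ≤ N → (i : R) ≠ 0)
    (hpow : ∀ i, 0 < i → i ≤ N → (s.map (· ^ i)).sum = (t.map (· ^ i)).sum) :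
    ∀ k ≤ N, s.esymm k = t.esymm k := by
  intro k
  induction k using Nat.strong_induction_on with
  | _ k ih =>
    intro hkN
    rcases k.eq_zero_or_pos with rfl | hk
    · simp [Multiset.esymm]
    refine mul_left_cancel₀ (hchar k hk hkN) ?_
    rw [Multiset.mul_esymm_eq_sum_map_pow, Multiset.mul_esymm_eq_sum_map_pow]
    congr 1
    refine sum_congr rfl fun a ha => ?_
    rw [Finset.mem_filter, Finset.HasAntidiagonal.mem_antidiagonal] at ha
    rw [ih a.1 ha.2 (by omega), hpow a.2 (by omega) (by omega)]

theorem Multiset.eq_of_sum_map_pow_eq {s t : Multiset R} (hcard : card s = card t)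
    (hchar : ∀ i, 0 < i → i ≤ card s → (i : R) ≠ 0)
    (hpow : ∀ i, 0 < i → i ≤ card s → (s.map (· ^ i)).sum = (t.map (· ^ i)).sum) :
    s = t := by
  have hprod : (s.map fun a => X - C a).prod = (t.map fun a => X - C a).prod := by
    rw [prod_X_sub_X_eq_sum_esymm, prod_X_sub_X_eq_sum_esymm, ← hcard]
    refine sum_congr rfl fun k hk => ?_
    rw [esymm_eq_of_sum_map_pow_eq hchar hpow k (Nat.lt_succ_iff.mp (mem_range.mp hk))]
  simpa only [roots_multiset_prod_X_sub_C] using congrArg roots hprod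

end Newton

theorem Multiset.sum_map_sum_replicate {ι M : Type*} [AddCommMonoid M] (s : Finset ι)
    (f : ι → ℕ) (g : ι → M) :
    ((∑ j ∈ s, replicate (f j) j).map g).sum = ∑ j ∈ s, f j • g j := by
  classical
  induction s using Finset.induction_on with
  | empty => simp
  | insert a s ha ih => simp [Finset.sum_insert ha, ih]

theorem two_mul_le_sum_natAbs_of_sum_mul_pow_eq_zero {ι R : Type*} [Fintype ι]
    [CommRing R] [IsDomain R] {x : ι → R} (hx : Function.Injective x) {m : ℕ}
    (hchar : ∀ i, 0 < i → i < m → (i : R) ≠ 0) {w : ι → ℤ} (hw : w ≠ 0)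
    (hsum : ∑ j, w j = 0) (hpow : ∀ i, 0 < i → i < m → ∑ j, (w j : R) * x j ^ i = 0) :
    2 * m ≤ ∑ j, (w j).natAbs := by
  classical
  by_contra! hlt
  set P : Multiset ι := ∑ j, .replicate (w j).toNat j
  set Q : Multiset ι := ∑ j, .replicate (-w j).toNat j
  have hcount (f : ι → ℕ) (j : ι) : (∑ i, Multiset.replicate (f i) i).count j = f j := by
    simp [Multiset.count_sum', Multiset.count_replicate]
  have hbal : ∑ j, (w j).toNat = ∑ j, (-w j).toNat := by
    have : ∑ j, (((w j).toNat : ℤ) - (-w j).toNat) = 0 := by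
      simpa only [Int.toNat_sub_toNat_neg] using hsum
    rw [sum_sub_distrib, sub_eq_zero] at this
    exact_mod_cast this
  have habs : ∑ j, (w j).natAbs = ∑ j, (w j).toNat + ∑ j, (-w j).toNat := by
    rw [← sum_add_distrib]
    exact sum_congr rfl fun j _ => by omega
  have hcardP : Multiset.card P = ∑ j, (w j).toNat := by simp [P]
  have hcardQ : Multiset.card Q = ∑ j, (-w j).toNat := by simp [Q]
  have hPQ : P.map x = Q.map x := by
    refine Multiset.eq_of_sum_map_pow_eq (by rw [Multiset.card_map, Multiset.card_map, hcardP,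
      hcardQ, hbal]) (fun i hi hiP => hchar i hi ?_) fun i hi hiP => ?_
    · rw [Multiset.card_map, hcardP] at hiP
      omega
    rw [Multiset.card_map, hcardP] at hiP
    rw [Multiset.map_map, Multiset.map_map, ← sub_eq_zero]
    simp only [P, Q, Function.comp_def, Multiset.sum_map_sum_replicate, nsmul_eq_mul,
      ← sum_sub_distrib, ← sub_mul]
    rw [← hpow i hi (by omega)]
    refine sum_congr rfl fun j _ => ?_
    have hwj := congrArg (Int.cast : ℤ → R) (Int.toNat_sub_toNat_neg (w j))
    push_cast at hwj
    rw [hwj]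
  refine hw (funext fun j => ?_)
  have := congrArg (Multiset.count j) (Multiset.map_injective hx hPQ)
  rw [hcount, hcount] at this
  rw [Pi.zero_apply]
  omega

noncomputable def Polynomial.Sequence.descPochhammer (R : Type*) [Ring R] [Nontrivial R]
    [NoZeroDivisors R] : Sequence R where
  elems' := _root_.descPochhammer R
  degree_eq' t := by
    rw [degree_eq_natDegree (monic_descPochhammer R t).ne_zero, descPochhammer_natDegree]

theorem sum_mul_pow_eq_zero_of_sum_mul_descPochhammer_eq_zero {ι R : Type*} [Fintype ι]
    [CommRing R] (c x : ι → R) {m : ℕ}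
    (h : ∀ t < m, ∑ j, c j * (descPochhammer R t).eval (x j) = 0) {i : ℕ} (hi : i < m) :
    ∑ j, c j * x j ^ i = 0 := by
  let φ : ℤ[X] →ₗ[ℤ] R := ∑ j, c j • (aeval (x j)).toLinearMap
  have hφ (p : ℤ[X]) : φ p = ∑ j, c j * aeval (x j) p := by simp [φ]
  have hspan : degreeLT ℤ m ≤ LinearMap.ker φ := by
    rw [← (Sequence.descPochhammer ℤ).span_degreeLT fun t _ => by simp [Sequence.descPochhammer,
      (monic_descPochhammer ℤ t).leadingCoeff], Submodule.span_le]
    rintro _ ⟨t, ht, rfl⟩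
    simpa [hφ, Sequence.descPochhammer, aeval_def, eval₂_eq_eval_map, descPochhammer_map]
      using h t ht
  have := hspan (mem_degreeLT.mpr (by simpa using hi) : (X ^ i : ℤ[X]) ∈ degreeLT ℤ m)
  simpa [hφ] using this

theorem eq_zero_of_nsmul_eq_zero_of_coprime {A : Type*} [AddMonoid A] {p q : ℕ}
    (hpq : p.Coprime q) {a : A} (hp : p • a = 0) (hq : q • a = 0) : a = 0 :=
  AddMonoid.addOrderOf_eq_one_iff.mp <| Nat.eq_one_of_dvd_coprimes hpq
    (addOrderOf_dvd_of_nsmul_eq_zero hp) (addOrderOf_dvd_of_nsmul_eq_zero hq)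

theorem AddMonoidHom.prod_surjective_of_coprime {G A B : Type*} [AddGroup G] [AddCommGroup A]
    [AddCommGroup B] {f : G →+ A} {g : G →+ B} (hf : Function.Surjective f)
    (hg : Function.Surjective g) {p q : ℕ} (hpq : p.Coprime q) (hA : ∀ a : A, p • a = 0)
    (hB : ∀ b : B, q • b = 0) : Function.Surjective (f.prod g) := by
  have hbez : (p : ℤ) * p.gcdA q + q * p.gcdB q = 1 := by
    rw [← Nat.gcd_eq_gcd_ab, hpq.gcd_eq_one, Nat.cast_one]
  have hpA (a : A) : ((p : ℤ) * p.gcdA q) • a = 0 := by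
    rw [mul_comm, mul_zsmul, natCast_zsmul, hA, smul_zero]
  have hqB (b : B) : ((q : ℤ) * p.gcdB q) • b = 0 := by
    rw [mul_comm, mul_zsmul, natCast_zsmul, hB, smul_zero]
  rintro ⟨a, b⟩
  obtain ⟨x, rfl⟩ := hf a
  obtain ⟨y, rfl⟩ := hg b
  refine ⟨((q : ℤ) * p.gcdB q) • x + ((p : ℤ) * p.gcdA q) • y, Prod.ext ?_ ?_⟩
  · change f _ = f x
    rw [map_add, map_zsmul, map_zsmul, hpA, add_zero, eq_sub_of_add_eq' hbez, sub_zsmul,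
      one_zsmul, hpA, neg_zero, add_zero]
  · change g _ = g y
    rw [map_add, map_zsmul, map_zsmul, hqB, zero_add, eq_sub_of_add_eq hbez, sub_zsmul,
      one_zsmul, hqB, neg_zero, add_zero]

theorem Submodule.natCard_quotient_eq_pow {K V : Type*} [Field K] [AddCommGroup V] [Module K V]
    [Module.Finite K V] (W : Submodule K V) :
    Nat.card (V ⧸ W) = Nat.card K ^ (Module.finrank K V - Module.finrank K W) := by
  rw [Module.natCard_eq_pow_finrank (K := K), ← W.finrank_quotient_add_finrank, Nat.add_sub_cancel]

theorem derAt1_apply (n i : ℕ) (v : Fin (n + 1) → ℤ) :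
    derAt1 n i v = ∑ j : Fin (n + 1), ((j : ℕ).descFactorial i : ℤ) * v j := by
  simp [derAt1]

theorem derAt1_single (n i : ℕ) (j : Fin (n + 1)) :
    derAt1 n i (Pi.single j 1) = ((j : ℕ).descFactorial i : ℤ) := by
  simp [derAt1_apply, Pi.single_apply]

theorem mem_rootLat {n : ℕ} {v : Fin (n + 1) → ℤ} : v ∈ rootLat n ↔ ∑ j, v j = 0 := by
  simp [rootLat, derAt1_apply]

/-- On `rootLat n` the last coordinate is minus the sum of the others, so reducing the first `n`
coordinates mod 2 loses nothing: `v mod 2` lies in the parity extension of `C` iff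
`truncMod2 n v ∈ C`. -/
def truncMod2 (n : ℕ) : (Fin (n + 1) → ℤ) →+ (Fin n → ZMod 2) where
  toFun v j := v j.castSucc
  map_zero' := by ext; simp
  map_add' _ _ := by ext; simp

theorem truncMod2_apply (n : ℕ) (v : Fin (n + 1) → ℤ) :
    truncMod2 n v = fun j => (v j.castSucc : ZMod 2) :=
  rfl

/-- Coordinate `t` is the congruence of order `t + 1`; `rootLat n ⊓ ker` is `A_n^{(m,l)}`. -/
noncomputable def craigSyndrome (n m l : ℕ) : (Fin (n + 1) → ℤ) →+ (Fin (m - 1) → ZMod l) where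
  toFun v t := derAt1 n (t + 1) v
  map_zero' := by ext; simp
  map_add' _ _ := by ext; simp

theorem craigSyndrome_apply (n m l : ℕ) (v : Fin (n + 1) → ℤ) (t : Fin (m - 1)) :
    craigSyndrome n m l v t = derAt1 n (t + 1) v :=
  rfl

theorem two_mul_le_sum_sq_of_craigSyndrome_eq_zero {n m l : ℕ} [Fact l.Prime] (hml : m ≤ l)
    (hnl : n + 1 ≤ l) {w : Fin (n + 1) → ℤ} (hroot : w ∈ rootLat n)
    (hsyn : craigSyndrome n m l w = 0) (hw : w ≠ 0) :
    (2 * m : ℤ) ≤ ∑ j, w j ^ 2 := by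
  have hsum : ∑ j, w j = 0 := mem_rootLat.mp hroot
  have hinj : Function.Injective fun j : Fin (n + 1) => ((j : ℕ) : ZMod l) := fun a b hab =>
    Fin.ext <| by
      simpa [ZMod.val_cast_of_lt (a.2.trans_le hnl), ZMod.val_cast_of_lt (b.2.trans_le hnl)]
        using congrArg ZMod.val hab
  have hchar (i : ℕ) (hi : 0 < i) (him : i < m) : (i : ZMod l) ≠ 0 := by
    rw [Ne, ZMod.natCast_eq_zero_iff]
    exact fun h => absurd (Nat.le_of_dvd hi h) (by omega)
  have hdesc (t : ℕ) (ht : t < m) :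
      ∑ j : Fin (n + 1), (w j : ZMod l) * (descPochhammer (ZMod l) t).eval ((j : ℕ) : ZMod l)
        = 0 := by
    simp only [descPochhammer_eval_eq_descFactorial]
    rcases t.eq_zero_or_pos with rfl | ht0
    · simpa using congrArg (Int.cast : ℤ → ZMod l) hsum
    · have := congrFun hsyn ⟨t - 1, by omega⟩
      rw [craigSyndrome_apply, Pi.zero_apply, Nat.sub_add_cancel ht0, derAt1_apply] at this
      push_cast at this
      simpa [mul_comm] using this
  have := two_mul_le_sum_natAbs_of_sum_mul_pow_eq_zero hinj hchar hw hsum fun i _ hi =>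
    sum_mul_pow_eq_zero_of_sum_mul_descPochhammer_eq_zero _ _ hdesc hi
  calc (2 * m : ℤ) ≤ ∑ j, ((w j).natAbs : ℤ) := by exact_mod_cast this
    _ ≤ ∑ j, w j ^ 2 := sum_le_sum fun j _ => Int.natAbs_le_self_sq (w j)

theorem exists_mem_rootLat_truncMod2_eq {n : ℕ} (a : Fin n → ZMod 2) :
    ∃ v ∈ rootLat n, truncMod2 n v = a :=
  ⟨Fin.snoc (fun j => ((a j).val : ℤ)) (-∑ j, ((a j).val : ℤ)),
    mem_rootLat.mpr (by simp [Fin.sum_univ_castSucc]), by ext j; simp [truncMod2]⟩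

theorem exists_mem_rootLat_craigSyndrome_eq {n m l : ℕ} [Fact l.Prime] (hmn : m ≤ n + 1)
    (hml : m ≤ l) (b : Fin (m - 1) → ZMod l) :
    ∃ v ∈ rootLat n, craigSyndrome n m l v = b := by
  let e (t : Fin (m - 1)) : Fin (n + 1) := (Fin.castLE (by omega) t).succ
  let M : Matrix (Fin (m - 1)) (Fin (m - 1)) (ZMod l) :=
    .of fun s t => ((t + 1 : ℕ).descFactorial (s + 1) : ZMod l)
  have hM : IsUnit M := by
    have hupper : M.IsUpperTriangular := fun s t hts => by
      have : (t : ℕ) + 1 < s + 1 := Nat.succ_lt_succ hts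
      change (((t : ℕ) + 1).descFactorial (s + 1) : ZMod l) = 0
      rw [Nat.descFactorial_eq_zero_iff_lt.mpr this, Nat.cast_zero]
    rw [Matrix.isUnit_iff_isUnit_det, Matrix.det_of_isUpperTriangular hupper]
    refine IsUnit.mk0 _ (prod_ne_zero_iff.mpr fun s _ => ?_)
    simp only [M, Matrix.of_apply, Nat.descFactorial_self, Ne, ZMod.natCast_eq_zero_iff,
      (Fact.out : l.Prime).dvd_factorial]
    omega
  obtain ⟨c, hc⟩ := Matrix.mulVec_surjective_iff_isUnit.mpr hM b
  refine ⟨∑ t, (c t).val • (Pi.single (e t) 1 - Pi.single 0 1), ?_, ?_⟩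
  · simp only [rootLat, LinearMap.mem_ker, map_sum, map_nsmul, map_sub, derAt1_single,
      Nat.descFactorial_zero, sub_self, smul_zero, sum_const_zero]
  · rw [← hc]
    ext s
    rw [craigSyndrome_apply, map_sum, Int.cast_sum]
    refine sum_congr rfl fun t _ => ?_
    rw [map_nsmul, map_sub, derAt1_single, derAt1_single, Fin.val_zero,
      Nat.zero_descFactorial_succ, Nat.cast_zero, sub_zero, nsmul_eq_mul, Int.cast_mul,
      Int.cast_natCast, Int.cast_natCast, ZMod.natCast_zmod_val, mul_comm]
    rfl

theorem hammingNorm_intCast_le_sum_sq {ι R : Type*} [Fintype ι] [AddGroupWithOne R]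
    [DecidableEq R] (u : ι → ℤ) : (hammingNorm fun j => (u j : R) : ℤ) ≤ ∑ j, u j ^ 2 := by
  rw [hammingNorm, card_filter]
  push_cast
  refine sum_le_sum fun j _ => ?_
  split_ifs with h
  · have hu : u j ≠ 0 := fun h0 => h (by simp [h0])
    have := Int.natAbs_le_self_sq (u j)
    have := Int.natAbs_pos.mpr hu
    omega
  · positivity

theorem hammingNorm_truncMod2_le_sum_sq {n : ℕ} (v : Fin (n + 1) → ℤ) :
    (hammingNorm (truncMod2 n v) : ℤ) ≤ ∑ j, v j ^ 2 :=
  calc (hammingNorm (truncMod2 n v) : ℤ) ≤ ∑ j : Fin n, v j.castSucc ^ 2 := by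
        rw [truncMod2_apply]
        exact hammingNorm_intCast_le_sum_sq fun j : Fin n => v j.castSucc
    _ ≤ ∑ j, v j ^ 2 := by
        rw [Fin.sum_univ_castSucc]
        exact le_add_of_nonneg_right (sq_nonneg _)

theorem exists_eq_two_smul_of_truncMod2_eq_zero {n : ℕ} {v : Fin (n + 1) → ℤ}
    (hv : v ∈ rootLat n) (h : truncMod2 n v = 0) : ∃ w ∈ rootLat n, v = 2 • w := by
  have hsum := mem_rootLat.mp hv
  have hinit (j : Fin n) : (2 : ℤ) ∣ v j.castSucc :=
    (ZMod.intCast_zmod_eq_zero_iff_dvd _ 2).mp (congrFun h j)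
  have heven (j : Fin (n + 1)) : (2 : ℤ) ∣ v j := by
    induction j using Fin.lastCases with
    | cast j => exact hinit j
    | last =>
      rw [Fin.sum_univ_castSucc, add_eq_zero_iff_eq_neg'] at hsum
      rw [hsum]
      exact (dvd_sum fun j _ => hinit j).neg_right
  choose w hw using heven
  refine ⟨w, mem_rootLat.mpr ?_, funext fun j => by simp [hw j]⟩
  have : 2 * ∑ j, w j = 0 := by simpa [mul_sum, ← hw] using hsum
  omega

noncomputable def codeSyndrome (n m l : ℕ) (C : Submodule (ZMod 2) (Fin n → ZMod 2)) :
    (Fin (n + 1) → ℤ) →+ ((Fin n → ZMod 2) ⧸ C) × (Fin (m - 1) → ZMod l) :=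
  (C.mkQ.toAddMonoidHom.comp (truncMod2 n)).prod (craigSyndrome n m l)

noncomputable def codeLattice (n m l : ℕ) (C : Submodule (ZMod 2) (Fin n → ZMod 2)) :
    AddSubgroup (Fin (n + 1) → ℤ) :=
  (rootLat n).toAddSubgroup ⊓ (codeSyndrome n m l C).ker

theorem mem_codeLattice {n m l : ℕ} {C : Submodule (ZMod 2) (Fin n → ZMod 2)}
    {v : Fin (n + 1) → ℤ} :
    v ∈ codeLattice n m l C ↔
      v ∈ rootLat n ∧ truncMod2 n v ∈ C ∧ craigSyndrome n m l v = 0 := by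
  simp [codeLattice, codeSyndrome, Submodule.Quotient.mk_eq_zero]

theorem eight_mul_le_sum_sq_of_mem_codeLattice {n m l : ℕ} [Fact l.Prime] (hlodd : Odd l)
    (hml : m ≤ l) (hnl : n + 1 ≤ l) {C : Submodule (ZMod 2) (Fin n → ZMod 2)}
    (hd : ∀ c ∈ C, c ≠ 0 → 8 * m ≤ hammingNorm c) {v : Fin (n + 1) → ℤ}
    (hv : v ∈ codeLattice n m l C) (hv0 : v ≠ 0) : (8 * m : ℤ) ≤ ∑ j, v j ^ 2 := by
  obtain ⟨hroot, hC, hsyn⟩ := mem_codeLattice.mp hv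
  by_cases hc : truncMod2 n v = 0
  · obtain ⟨w, hw, rfl⟩ := exists_eq_two_smul_of_truncMod2_eq_zero hroot hc
    have hsynw : craigSyndrome n m l w = 0 :=
      eq_zero_of_nsmul_eq_zero_of_coprime (Nat.coprime_two_left.mpr hlodd)
        (by rwa [← map_nsmul]) (by ext; simp)
    have hw0 : w ≠ 0 := by rintro rfl; simp at hv0
    have := two_mul_le_sum_sq_of_craigSyndrome_eq_zero hml hnl hw hsynw hw0
    calc (8 * m : ℤ) ≤ 4 * ∑ j, w j ^ 2 := by linarith
      _ = ∑ j, (2 • w) j ^ 2 := by simp [mul_sum, mul_pow]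
  · calc (8 * m : ℤ) ≤ hammingNorm (truncMod2 n v) := by exact_mod_cast hd _ hC hc
      _ ≤ ∑ j, v j ^ 2 := hammingNorm_truncMod2_le_sum_sq v

theorem codeLattice_addSubgroupOf_rootLat_index {n m l : ℕ} [Fact l.Prime] (hlodd : Odd l)
    (hmn : m ≤ n + 1) (hml : m ≤ l) (C : Submodule (ZMod 2) (Fin n → ZMod 2)) :
    ((codeLattice n m l C).addSubgroupOf (rootLat n).toAddSubgroup).index
      = 2 ^ (n - Module.finrank (ZMod 2) C) * l ^ (m - 1) := by
  set R := (rootLat n).toAddSubgroup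
  have htrunc :
      Function.Surjective ((C.mkQ.toAddMonoidHom.comp (truncMod2 n)).comp R.subtype) := by
    intro a
    obtain ⟨a, rfl⟩ := C.mkQ_surjective a
    obtain ⟨v, hv, rfl⟩ := exists_mem_rootLat_truncMod2_eq a
    exact ⟨⟨v, hv⟩, rfl⟩
  have hsyn : Function.Surjective ((craigSyndrome n m l).comp R.subtype) := by
    intro b
    obtain ⟨v, hv, rfl⟩ := exists_mem_rootLat_craigSyndrome_eq hmn hml b
    exact ⟨⟨v, hv⟩, rfl⟩
  have hsurj : Function.Surjective ((codeSyndrome n m l C).comp R.subtype) :=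
    AddMonoidHom.prod_surjective_of_coprime htrunc hsyn (Nat.coprime_two_left.mpr hlodd)
      (fun a => by rw [← Nat.cast_smul_eq_nsmul (ZMod 2), ZMod.natCast_self, zero_smul])
      fun b => by ext; simp
  rw [codeLattice, AddSubgroup.inf_addSubgroupOf_left, AddSubgroup.addSubgroupOf,
    AddMonoidHom.comap_ker, AddSubgroup.index_ker, AddMonoidHom.range_eq_top.mpr hsurj,
    AddSubgroup.card_top, Nat.card_prod, Submodule.natCard_quotient_eq_pow, Nat.card_zmod,
    Module.finrank_fin_fun, Nat.card_fun, Nat.card_zmod, Nat.card_eq_fintype_card,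
    Fintype.card_fin]

theorem sqrt_eight_mul_div_two_pow_div (n m k : ℕ) (hkn : k ≤ n) (L : ℝ) :
    (√(8 * m) / 2) ^ n / (2 ^ (n - k) * L)
      = 2 ^ ((k : ℝ) - n / 2) * (m : ℝ) ^ ((n : ℝ) / 2) / L := by
  have hsqrt : √(8 * m) / 2 = √(2 * m) := by
    rw [show (8 : ℝ) * m = 2 ^ 2 * (2 * m) by ring, Real.sqrt_mul (by positivity),
      Real.sqrt_sq (by norm_num)]
    ring
  have hpow : √(2 * m) ^ n = 2 ^ ((n : ℝ) / 2) * (m : ℝ) ^ ((n : ℝ) / 2) := by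
    rw [Real.sqrt_eq_rpow, ← Real.rpow_natCast, ← Real.rpow_mul (by positivity),
      Real.mul_rpow (by norm_num) (by positivity)]
    ring_nf
  have hsplit : (2 : ℝ) ^ ((n : ℝ) / 2) = 2 ^ ((k : ℝ) - n / 2) * 2 ^ (n - k) := by
    rw [← Real.rpow_natCast, ← Real.rpow_add two_pos, Nat.cast_sub hkn]
    ring_nf
  rw [hsqrt, hpow, hsplit, mul_right_comm, mul_comm (2 ^ (n - k) : ℝ) L,
    mul_div_mul_right _ _ (by positivity)]

theorem code_to_lattice_general (n m l k : ℕ) (hm2 : 2 * m ≤ n + 1)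
    (hl : n + 1 ≤ l) (hlp : l.Prime) (hlodd : Odd l)
    (C : Submodule (ZMod 2) (Fin n → ZMod 2))
    (hk : Module.finrank (ZMod 2) C = k)
    (hd : ∀ c ∈ C, c ≠ 0 → 8 * m ≤ hammingNorm c) :
    ∃ L : Submodule ℤ (Fin (n + 1) → ℤ), L ≤ rootLat n ∧
      (∀ v ∈ L, v ≠ 0 → (8 * m : ℤ) ≤ ∑ j, (v j) ^ 2) ∧
      ((L.toAddSubgroup).addSubgroupOf ((rootLat n).toAddSubgroup)).index
        = 2 ^ (n - k) * l ^ (m - 1) ∧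
      (Real.sqrt (8 * m) / 2) ^ n / ((2 : ℝ) ^ (n - k) * (l : ℝ) ^ (m - 1) * Real.sqrt (n + 1))
        ≥ (2 : ℝ) ^ ((k : ℝ) - (n : ℝ) / 2) * (m : ℝ) ^ ((n : ℝ) / 2)
            / ((l : ℝ) ^ (m - 1) * Real.sqrt (n + 1)) := by
  have : Fact l.Prime := ⟨hlp⟩
  have hkn : k ≤ n := hk ▸ (Submodule.finrank_le C).trans_eq (Module.finrank_fin_fun _)
  refine ⟨(codeLattice n m l C).toIntSubmodule, fun v hv => (mem_codeLattice.mp hv).1,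
    fun v hv hv0 => eight_mul_le_sum_sq_of_mem_codeLattice hlodd (by omega) hl hd hv hv0, ?_, ?_⟩
  · rw [← hk]
    exact codeLattice_addSubgroupOf_rootLat_index hlodd (by omega) (by omega) C
  · rw [mul_assoc, sqrt_eight_mul_div_two_pow_div n m k hkn]

/-- If a binary linear `[n, k, 8m]` code exists (with `m ≤ (n+1)/2` and `l ≥ n+1` an odd
prime), then there exists a rank-`n` lattice with minimum squared norm at least `8m` and
volume `2^{n-k} l^{m-1} (n+1)^{1/2}` (index `2^{n-k} l^{m-1}` in the root lattice `A_n`),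
hence of center density at least `2^{k-n/2} m^{n/2} / (l^{m-1}(n+1)^{1/2})`. -/
theorem code_to_lattice (n m l k : ℕ) (hm : 0 < m) (hm2 : 2 * m ≤ n + 1)
    (hl : n + 1 ≤ l) (hlp : l.Prime) (hlodd : Odd l)
    (C : Submodule (ZMod 2) (Fin n → ZMod 2))
    (hk : Module.finrank (ZMod 2) C = k)
    (hd : ∀ c ∈ C, c ≠ 0 → 8 * m ≤ hammingNorm c) :
    ∃ L : Submodule ℤ (Fin (n + 1) → ℤ), L ≤ rootLat n ∧
      (∀ v ∈ L, v ≠ 0 → (8 * m : ℤ) ≤ ∑ j, (v j) ^ 2) ∧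
      ((L.toAddSubgroup).addSubgroupOf ((rootLat n).toAddSubgroup)).index
        = 2 ^ (n - k) * l ^ (m - 1) ∧
      (Real.sqrt (8 * m) / 2) ^ n / ((2 : ℝ) ^ (n - k) * (l : ℝ) ^ (m - 1) * Real.sqrt (n + 1))
        ≥ (2 : ℝ) ^ ((k : ℝ) - (n : ℝ) / 2) * (m : ℝ) ^ ((n : ℝ) / 2)
            / ((l : ℝ) ^ (m - 1) * Real.sqrt (n + 1)) :=
  code_to_lattice_general n m l k hm2 hl hlp hlodd C hk hd
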